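/- arXiv:1408.6002 — 6 statements merged into one kernel-verified Lean document; each statement's English description precedes it below -/
import Mathlib

section
/- Let N be a positive integer, q a prime with q ∤ N, and γ, γ' consecutive units of Z mod N with gap g = γ' − γ. Among the q copies γ + jN (j = 0,...,q−1) of this gap in the units of Z mod qN, exactly those copies where q divides γ + jN or q divides γ' + jN fail to be a gap between consecutive units of Z mod qN, and these are at most two distinct values of j. -/
/-! A unit of `ℤ/qN` is exactly a unit of `ℤ/N` not divisible by `q`, so nothing new can appear
between the copies `γ + jN < γ' + jN`, and a copy survives iff `q` divides neither endpoint.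
Since `q ∤ N`, the shifts `x + jN` for `j < q` run through distinct residues mod `q`, so each
endpoint is divisible by `q` for at most one `j`. -/

namespace Nat

theorem coprime_add_mul_prime_mul_iff {q : ℕ} (hq : q.Prime) (a j N : ℕ) :
    Coprime (a + j * N) (q * N) ↔ ¬ q ∣ a + j * N ∧ Coprime a N := by
  rw [coprime_mul_iff_right, coprime_add_mul_right_left, coprime_comm, hq.coprime_iff_not_dvd]

theorem not_coprime_of_lt_add_mul_of_lt_add_mul {N M γ γ' : ℕ} (hNM : N ∣ M)
    (hcons : ∀ δ, γ < δ → δ < γ' → ¬ Coprime δ N) (j : ℕ) :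
    ∀ δ, γ + j * N < δ → δ < γ' + j * N → ¬ Coprime δ M := by
  intro δ hlo hhi hδ
  obtain ⟨d, rfl⟩ : ∃ d, δ = d + j * N := ⟨δ - j * N, by omega⟩
  exact hcons d (by omega) (by omega)
    ((coprime_add_mul_right_left d N j).mp (hδ.coprime_dvd_right hNM))

theorem card_filter_prime_dvd_add_mul_le_one {q N : ℕ} (hq : q.Prime) (hqN : ¬ q ∣ N) (a : ℕ) :
    ((Finset.range q).filter (fun j => q ∣ a + j * N)).card ≤ 1 := by
  refine Finset.card_le_one.mpr fun i hi j hj => ?_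
  simp only [Finset.mem_filter, Finset.mem_range] at hi hj
  have hmod : a + i * N ≡ a + j * N [MOD q] :=
    (modEq_zero_iff_dvd.mpr hi.2).trans (modEq_zero_iff_dvd.mpr hj.2).symm
  have hcop : q.gcd N = 1 := (hq.coprime_iff_not_dvd).mpr hqN
  exact ((hmod.add_left_cancel' a).cancel_right_of_coprime hcop).eq_of_lt_of_lt hi.1 hj.1

end Nat

theorem stmt_6_general (N q γ γ' : ℕ) (hq : q.Prime) (hqN : ¬ q ∣ N)
    (hγ : Nat.Coprime γ N) (hγ' : Nat.Coprime γ' N)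
    (hcons : ∀ δ, γ < δ → δ < γ' → ¬ Nat.Coprime δ N) :
    (∀ j < q,
      ((Nat.Coprime (γ + j * N) (q * N) ∧ Nat.Coprime (γ' + j * N) (q * N) ∧
          ∀ δ, γ + j * N < δ → δ < γ' + j * N → ¬ Nat.Coprime δ (q * N)) ↔
        ¬ (q ∣ γ + j * N ∨ q ∣ γ' + j * N))) ∧
    ((Finset.range q).filter (fun j => q ∣ γ + j * N ∨ q ∣ γ' + j * N)).card ≤ 2 := by
  refine ⟨fun j _ => ?_, ?_⟩
  · have hgap := Nat.not_coprime_of_lt_add_mul_of_lt_add_mul (dvd_mul_left N q) hcons j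
    rw [Nat.coprime_add_mul_prime_mul_iff hq, Nat.coprime_add_mul_prime_mul_iff hq]
    tauto
  · calc _ = ((Finset.range q).filter (fun j => q ∣ γ + j * N) ∪
              (Finset.range q).filter (fun j => q ∣ γ' + j * N)).card := by
          rw [Finset.filter_or]
      _ ≤ 1 + 1 := (Finset.card_union_le _ _).trans <| add_le_add
          (Nat.card_filter_prime_dvd_add_mul_le_one hq hqN γ)
          (Nat.card_filter_prime_dvd_add_mul_le_one hq hqN γ')

theorem stmt_6 (N q γ γ' : ℕ) (hN : 0 < N) (hq : q.Prime) (hqN : ¬ q ∣ N)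
    (hγ1 : 1 ≤ γ) (hγ'N : γ' ≤ N)
    (hγ : Nat.Coprime γ N) (hγ' : Nat.Coprime γ' N) (hlt : γ < γ')
    (hcons : ∀ δ, γ < δ → δ < γ' → ¬ Nat.Coprime δ N) :
    (∀ j < q,
      ((Nat.Coprime (γ + j * N) (q * N) ∧ Nat.Coprime (γ' + j * N) (q * N) ∧
          ∀ δ, γ + j * N < δ → δ < γ' + j * N → ¬ Nat.Coprime δ (q * N)) ↔
        ¬ (q ∣ γ + j * N ∨ q ∣ γ' + j * N))) ∧
    ((Finset.range q).filter (fun j => q ∣ γ + j * N ∨ q ∣ γ' + j * N)).card ≤ 2 :=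
  stmt_6_general N q γ γ' hq hqN hγ hγ' hcons
end

section
/- The number of pairs of consecutive units of Z mod p# at distance 2 (twin generators) equals ∏_{3 ≤ q ≤ p, q prime} (q − 2). -/
/-!
The twin generators modulo `N` are the residues `x` with `x` and `x + 2` both units of `ZMod N`.
For squarefree `N` the Chinese remainder theorem splits `ZMod N` into the fields `ZMod q`, `q ∣ N`,
and a pair of units in a product is a pair of units in every factor, so the count is multiplicative.
In `ZMod q` one only has to avoid `x = 0` and `x = -2`: these are two residues for odd `q`
and a single one for `q = 2`, which gives `∏ (q - 2)` over the odd primes `q ≤ p`.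
-/

open Finset Function

def unitPairs (R : Type*) [Semiring R] (a : R) : Set R := {x | IsUnit x ∧ IsUnit (x + a)}

theorem card_unitPairs_congr {R S : Type*} [Semiring R] [Semiring S] (e : R ≃+* S) (a : R) :
    Nat.card (unitPairs R a) = Nat.card (unitPairs S (e a)) :=
  Nat.card_congr <| e.toEquiv.subtypeEquiv fun x => by simp [unitPairs, ← map_add]

theorem card_unitPairs_pi {ι : Type*} [Fintype ι] {R : ι → Type*} [∀ i, Semiring (R i)]
    (a : ∀ i, R i) :
    Nat.card (unitPairs (∀ i, R i) a) = ∏ i, Nat.card (unitPairs (R i) (a i)) := by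
  rw [← Nat.card_pi]
  refine Nat.card_congr ((Equiv.subtypeEquivRight fun x => ?_).trans Equiv.subtypePiEquivPi)
  simp [unitPairs, Pi.isUnit_iff, forall_and]

theorem ZMod.card_unitPairs_prod {ι : Type*} [Fintype ι] (n : ι → ℕ)
    (hn : Pairwise (Nat.Coprime on n)) (k : ℕ) :
    Nat.card (unitPairs (ZMod (∏ i, n i)) k) = ∏ i, Nat.card (unitPairs (ZMod (n i)) k) := by
  rw [card_unitPairs_congr (ZMod.prodEquivPi n hn), map_natCast, card_unitPairs_pi]
  rfl

theorem ZMod.card_unitPairs_primorial (p k : ℕ) :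
    Nat.card (unitPairs (ZMod (primorial p)) k) =
      ∏ q ∈ range (p + 1) with q.Prime, Nat.card (unitPairs (ZMod q) k) := by
  set P := {q ∈ range (p + 1) | q.Prime}
  have hP : Pairwise (Nat.Coprime on fun q : P => (q : ℕ)) := fun q r hqr =>
    (Nat.coprime_primes (mem_filter.1 q.2).2 (mem_filter.1 r.2).2).2 (Subtype.coe_ne_coe.2 hqr)
  rw [primorial, ← prod_coe_sort P, ZMod.card_unitPairs_prod _ hP,
    prod_coe_sort P fun q => Nat.card (unitPairs (ZMod q) k)]

theorem card_unitPairs_field {F : Type*} [Field F] [Fintype F] [DecidableEq F] (a : F) :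
    Nat.card (unitPairs F a) = Fintype.card F - #{0, -a} := by
  have : unitPairs F a = ((({0, -a} : Finset F)ᶜ : Finset F) : Set F) := by
    ext x
    simp [unitPairs, eq_neg_iff_add_eq_zero, and_comm]
  rw [this, Nat.card_coe_set_eq, Set.ncard_coe_finset, card_compl]

theorem ZMod.card_unitPairs_two_of_ne_two {q : ℕ} [Fact q.Prime] (hq : q ≠ 2) :
    Nat.card (unitPairs (ZMod q) 2) = q - 2 := by
  have h2 : (2 : ZMod q) ≠ 0 := Ring.two_ne_zero (by rwa [ZMod.ringChar_zmod_n])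
  rw [card_unitPairs_field, ZMod.card, card_pair (by simpa [eq_comm] using h2)]

theorem ZMod.card_unitPairs_two_two : Nat.card (unitPairs (ZMod 2) 2) = 1 := by
  rw [card_unitPairs_field, ZMod.card]
  decide

theorem ZMod.unitPairs_natCast_eq_image (N k : ℕ) [NeZero N] :
    unitPairs (ZMod N) k =
      ({γ ∈ range N | γ.Coprime N ∧ (γ + k).Coprime N}.image (↑) : Finset (ZMod N)) := by
  ext x
  simp only [unitPairs, Set.mem_ofPred_eq, coe_image, coe_filter, mem_range, Set.mem_image]
  constructor
  · rintro ⟨hx, hxk⟩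
    refine ⟨x.val, ⟨x.val_lt, ?_, ?_⟩, ZMod.natCast_zmod_val x⟩
    · rwa [← ZMod.isUnit_iff_coprime, ZMod.natCast_zmod_val]
    · rwa [← ZMod.isUnit_iff_coprime, Nat.cast_add, ZMod.natCast_zmod_val]
  · rintro ⟨γ, ⟨-, hγ, hγk⟩, rfl⟩
    rw [← Nat.cast_add, ZMod.isUnit_iff_coprime, ZMod.isUnit_iff_coprime]
    exact ⟨hγ, hγk⟩

theorem card_filter_coprime_Icc_eq_card_unitPairs (N k : ℕ) [NeZero N] :
    #{γ ∈ Icc 1 N | γ.Coprime N ∧ (γ + k).Coprime N} = Nat.card (unitPairs (ZMod N) k) := by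
  have hper : Periodic (fun γ => γ.Coprime N ∧ (γ + k).Coprime N) N := fun γ => by
    simp [add_right_comm γ N k]
  rw [← Ico_add_one_right_eq_Icc, add_comm, Nat.filter_Ico_card_eq_of_periodic _ _ _ hper,
    Nat.count_eq_card_filter_range, ZMod.unitPairs_natCast_eq_image, Nat.card_coe_set_eq,
    Set.ncard_coe_finset, card_image_of_injOn]
  intro γ hγ δ hδ h
  simp only [coe_filter, mem_range, Set.mem_ofPred_eq] at hγ hδ
  rw [← ZMod.val_cast_of_lt hγ.1, ← ZMod.val_cast_of_lt hδ.1, h]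

theorem stmt_7_general (p : ℕ) :
    ((Finset.Icc 1 (primorial p)).filter
        (fun γ => Nat.Coprime γ (primorial p) ∧ Nat.Coprime (γ + 2) (primorial p))).card =
      ∏ q ∈ (Finset.Icc 3 p).filter Nat.Prime, (q - 2) := by
  have : NeZero (primorial p) := ⟨(primorial_pos p).ne'⟩
  have hodd : {q ∈ Icc 3 p | q.Prime} = {q ∈ ({q ∈ range (p + 1) | q.Prime}) | 3 ≤ q} := by
    ext q
    simp only [mem_filter, mem_Icc, mem_range, Nat.lt_add_one_iff]
    tauto
  rw [card_filter_coprime_Icc_eq_card_unitPairs, ZMod.card_unitPairs_primorial, hodd,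
    ← prod_filter_of_ne (p := (3 ≤ ·))]
  · refine prod_congr rfl fun q hq => ?_
    have : Fact q.Prime := ⟨(mem_filter.1 (mem_filter.1 hq).1).2⟩
    rw [Nat.cast_ofNat, ZMod.card_unitPairs_two_of_ne_two (by have := (mem_filter.1 hq).2; omega)]
  · -- the factor at `q = 2` is `1`
    intro q hq hq1
    by_contra! hq3
    obtain rfl : q = 2 := by have := (mem_filter.1 hq).2.two_le; omega
    exact hq1 (by rw [Nat.cast_ofNat, ZMod.card_unitPairs_two_two])

theorem stmt_7 (p : ℕ) (hp : p.Prime) (hp3 : 3 ≤ p) :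
    ((Finset.Icc 1 (primorial p)).filter
        (fun γ => Nat.Coprime γ (primorial p) ∧ Nat.Coprime (γ + 2) (primorial p))).card =
      ∏ q ∈ (Finset.Icc 3 p).filter Nat.Prime, (q - 2) :=
  stmt_7_general p
end

section
/- If m + 1 consecutive gaps in the cycle of gaps of Z mod p# all equal the same value g (i.e., there are m + 2 units of Z mod p# in arithmetic progression with common difference g, consecutive as units), then every prime q ≤ m + 2 with q ≤ p divides g. -/
theorem Nat.exists_lt_dvd_add_mul {q g : ℕ} (a : ℕ) (hq : 0 < q) (hqg : q.Coprime g) :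
    ∃ i < q, q ∣ a + i * g := by
  have : NeZero q := ⟨hq.ne'⟩
  let u := ZMod.unitOfCoprime g hqg.symm
  refine ⟨((-a : ZMod q) * ↑u⁻¹).val, ZMod.val_lt _, ?_⟩
  rw [← ZMod.natCast_eq_zero_iff]
  push_cast
  rw [ZMod.natCast_zmod_val, mul_assoc, ← ZMod.coe_unitOfCoprime g hqg.symm, Units.inv_mul,
    mul_one, add_neg_cancel]

theorem stmt_11_general (p m g γ : ℕ)
    (hunits : ∀ i ≤ m + 1, Nat.Coprime (γ + i * g) (primorial p)) :
    ∀ q, q.Prime → q ≤ m + 2 → q ≤ p → q ∣ g := by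
  intro q hq hqm hqp
  by_contra hqg
  obtain ⟨i, hiq, hqi⟩ := Nat.exists_lt_dvd_add_mul γ hq.pos (hq.coprime_iff_not_dvd.mpr hqg)
  have hq_one :=
    Nat.eq_one_of_dvd_coprimes (hunits i (by omega)) hqi (hq.dvd_primorial_iff.mpr hqp)
  exact hq.ne_one hq_one

theorem stmt_11 (p m g γ : ℕ) (hp : p.Prime) (hg : 0 < g)
    (hunits : ∀ i ≤ m + 1, Nat.Coprime (γ + i * g) (primorial p))
    (hcons : ∀ i ≤ m, ∀ δ, γ + i * g < δ → δ < γ + (i + 1) * g →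
      ¬ Nat.Coprime δ (primorial p)) :
    ∀ q, q.Prime → q ≤ m + 2 → q ≤ p → q ∣ g :=
  stmt_11_general p m g γ hunits
end

section
/- For any prime p ≥ 5, the cycle of gaps of Z mod p# contains at least two gaps equal to 2q, where q is the largest prime less than p. -/
/-!
Pick a centre `c = γ + q` divisible by every prime below `q`, with `q` dividing one of `c ± 1`
and `p` the other; the Chinese remainder theorem provides such a `c` for either choice of sides.
Every `δ` with `0 < |δ - c| < q`, `δ ≠ c ± 1`, shares the least prime factor of `|δ - c|` with
`c`, and `c` itself is even, so `(c - q, c + q)` contains no unit. The endpoints `c ± q` are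
units: primes below `q` divide `c` but not `q`; `q` divides `c ± 1`, hence neither `c` nor `c ± q`;
and the multiple of `p` at `c ± 1` lies within `q + 1 < p` of `c ± q`. The two choices of sides
give two such gaps.
-/

def IsUnitGap (N γ g : ℕ) : Prop :=
  γ.Coprime N ∧ (γ + g).Coprime N ∧ ∀ δ, γ < δ → δ < γ + g → ¬ δ.Coprime N

theorem IsUnitGap.pos {N γ g : ℕ} (h : IsUnitGap N γ g) (hN : N ≠ 1) : 0 < γ :=
  Nat.pos_of_ne_zero fun hγ => hN ((Nat.coprime_zero_left N).mp (hγ ▸ h.1))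

theorem not_dvd_of_dvd_of_ne {n x y : ℕ} (hy : n ∣ y) (hne : x ≠ y) (hxy : x < y + n)
    (hyx : y < x + n) : ¬ n ∣ x := by
  intro hx
  rcases Nat.lt_or_gt_of_ne hne with h | h
  · exact Nat.not_dvd_of_pos_of_lt (Nat.sub_pos_of_lt h) (by omega) (Nat.dvd_sub hy hx)
  · exact Nat.not_dvd_of_pos_of_lt (Nat.sub_pos_of_lt h) (by omega) (Nat.dvd_sub hx hy)

theorem coprime_primorial_iff {n p : ℕ} :
    n.Coprime (primorial p) ↔ ∀ r, r.Prime → r ≤ p → ¬ r ∣ n := by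
  rw [← not_iff_not, Nat.Prime.not_coprime_iff_dvd]
  push Not
  exact exists_congr fun r => ⟨fun ⟨hr, hrn, hrp⟩ => ⟨hr, hr.dvd_primorial_iff.mp hrp, hrn⟩,
    fun ⟨hr, hrp, hrn⟩ => ⟨hr, hrn, hr.dvd_primorial_iff.mpr hrp⟩⟩

theorem coprime_primorial_of_not_dvd {n p q : ℕ} (hqmax : ∀ r, r.Prime → r < p → r ≤ q)
    (hsmall : ∀ r, r.Prime → r < q → ¬ r ∣ n) (hqn : ¬ q ∣ n) (hpn : ¬ p ∣ n) :
    n.Coprime (primorial p) := by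
  refine coprime_primorial_iff.mpr fun r hr hrp => ?_
  rcases hrp.lt_or_eq with hrp | rfl
  · rcases (hqmax r hr hrp).lt_or_eq with hrq | rfl
    · exact hsmall r hr hrq
    · exact hqn
  · exact hpn

theorem exists_lt_primorial_dvd_add (p : ℕ) (s : ℕ → ℕ) :
    ∃ γ < primorial p, ∀ r, r.Prime → r ≤ p → r ∣ γ + s r := by
  have hne : ∀ r ∈ Nat.primesLE p, r ≠ 0 := fun r hr => (Nat.prime_of_mem_primesLE hr).ne_zero
  have hco : Set.Pairwise (Nat.primesLE p : Set ℕ) (Function.onFun Nat.Coprime id) :=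
    fun r hr r' hr' h =>
      (Nat.coprime_primes (Nat.prime_of_mem_primesLE hr) (Nat.prime_of_mem_primesLE hr')).mpr h
  let γ := Nat.chineseRemainderOfFinset (fun r => (r - 1) * s r) id _ hne hco
  refine ⟨γ, ?_, fun r hr hrp => ?_⟩
  · rw [primorial_eq_prod_primesLE]
    exact Nat.chineseRemainderOfFinset_lt_prod _ _ hne hco
  · have hγ : (γ : ℕ) ≡ (r - 1) * s r [MOD r] := γ.2 r (Nat.mem_primesLE.mpr ⟨hrp, hr⟩)
    rw [← Nat.modEq_zero_iff_dvd]
    calc (γ : ℕ) + s r ≡ (r - 1) * s r + s r [MOD r] := hγ.add_right _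
      _ = r * s r := by rw [Nat.sub_one_mul, Nat.sub_add_cancel (Nat.le_mul_of_pos_left _ hr.pos)]
      _ ≡ 0 [MOD r] := Nat.modEq_zero_iff_dvd.mpr (dvd_mul_right _ _)

theorem exists_lt_primorial_dvd_add_of_lt {p q : ℕ} (hp : p.Prime) (hq : q.Prime) (hqp : q < p)
    (x y : ℕ) :
    ∃ γ < primorial p, (∀ r, r.Prime → r < q → r ∣ γ + q) ∧ q ∣ γ + x ∧ p ∣ γ + y := by
  obtain ⟨γ, hγ, hdvd⟩ :=
    exists_lt_primorial_dvd_add p fun r => if r = q then x else if r = p then y else q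
  refine ⟨γ, hγ, fun r hr hrq => ?_, ?_, ?_⟩
  · simpa [hrq.ne, (hrq.trans hqp).ne] using hdvd r hr (by omega)
  · simpa using hdvd q hq hqp.le
  · simpa [hqp.ne'] using hdvd p hp le_rfl

theorem exists_prime_lt_dvd_of_near {c q δ : ℕ} (hsmall : ∀ r, r.Prime → r < q → r ∣ c)
    (hq : 2 < q) (hlo : c < δ + q) (hhi : δ < c + q) (hlo1 : δ + 1 ≠ c) (hhi1 : δ ≠ c + 1) :
    ∃ r, r.Prime ∧ r < q ∧ r ∣ δ := by
  have hdist : ∀ t, t < q → t ≠ 1 → ∃ r, r.Prime ∧ r < q ∧ r ∣ t ∧ r ∣ c := by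
    intro t htq ht1
    rcases Nat.eq_zero_or_pos t with rfl | ht0
    · exact ⟨2, Nat.prime_two, hq, dvd_zero 2, hsmall 2 Nat.prime_two hq⟩
    · have hmin : t.minFac < q := (Nat.minFac_le ht0).trans_lt htq
      exact ⟨t.minFac, Nat.minFac_prime ht1, hmin, t.minFac_dvd,
        hsmall _ (Nat.minFac_prime ht1) hmin⟩
  rcases le_total δ c with h | h
  · obtain ⟨t, rfl⟩ := Nat.exists_eq_add_of_le h
    obtain ⟨r, hr, hrq, hrt, hrc⟩ := hdist t (by omega) (by omega)
    exact ⟨r, hr, hrq, (Nat.dvd_add_left hrt).mp hrc⟩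
  · obtain ⟨t, rfl⟩ := Nat.exists_eq_add_of_le h
    obtain ⟨r, hr, hrq, hrt, hrc⟩ := hdist t (by omega) (by omega)
    exact ⟨r, hr, hrq, dvd_add hrc hrt⟩

theorem isUnitGap_primorial {p q γ a b : ℕ} (hp : p.Prime) (hq : q.Prime) (hq3 : 3 ≤ q)
    (hqp : q + 1 < p) (hqmax : ∀ r, r.Prime → r < p → r ≤ q)
    (hsmall : ∀ r, r.Prime → r < q → r ∣ γ + q) (hqa : q ∣ γ + a) (hpb : p ∣ γ + b)
    (hab : a = q - 1 ∧ b = q + 1 ∨ a = q + 1 ∧ b = q - 1) :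
    IsUnitGap (primorial p) γ (2 * q) := by
  have hqc : ¬ q ∣ γ + q := not_dvd_of_dvd_of_ne hqa (by omega) (by omega) (by omega)
  have hend : ∀ n, n = γ ∨ n = γ + 2 * q → n.Coprime (primorial p) := by
    intro n hn
    have hdvd_centre : ∀ d, d ∣ n → (d ∣ γ + q ↔ d ∣ q) := by
      intro d hd
      rcases hn with rfl | rfl
      · exact Nat.dvd_add_right hd
      · rw [two_mul, ← add_assoc] at hd
        exact ⟨fun h => (Nat.dvd_add_right h).mp hd, fun h => (Nat.dvd_add_left h).mp hd⟩
    refine coprime_primorial_of_not_dvd hqmax (fun r hr hrq hrn => ?_) (fun hqn => ?_) ?_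
    · have := (Nat.prime_dvd_prime_iff_eq hr hq).mp ((hdvd_centre r hrn).mp (hsmall r hr hrq))
      omega
    · exact hqc ((hdvd_centre q hqn).mpr dvd_rfl)
    · rcases hn with rfl | rfl <;> exact not_dvd_of_dvd_of_ne hpb (by omega) (by omega) (by omega)
  refine ⟨hend γ (.inl rfl), hend _ (.inr rfl), fun δ hlo hhi => ?_⟩
  rw [coprime_primorial_iff]
  push Not
  by_cases hnbr : δ = γ + a ∨ δ = γ + b
  · rcases hnbr with rfl | rfl
    · exact ⟨q, hq, by omega, hqa⟩
    · exact ⟨p, hp, le_rfl, hpb⟩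
  · obtain ⟨r, hr, hrq, hrδ⟩ :=
      exists_prime_lt_dvd_of_near (δ := δ) hsmall (by omega) (by omega) (by omega) (by omega)
        (by omega)
    exact ⟨r, hr, by omega, hrδ⟩

theorem stmt_12 (p q : ℕ) (hp : p.Prime) (hp5 : 5 ≤ p) (hq : q.Prime) (hqp : q < p)
    (hqmax : ∀ r, r.Prime → r < p → r ≤ q) :
    ∃ γ₁ γ₂, γ₁ ∈ Finset.Icc 1 (primorial p) ∧ γ₂ ∈ Finset.Icc 1 (primorial p) ∧ γ₁ ≠ γ₂ ∧
      (Nat.Coprime γ₁ (primorial p) ∧ Nat.Coprime (γ₁ + 2 * q) (primorial p) ∧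
        ∀ δ, γ₁ < δ → δ < γ₁ + 2 * q → ¬ Nat.Coprime δ (primorial p)) ∧
      (Nat.Coprime γ₂ (primorial p) ∧ Nat.Coprime (γ₂ + 2 * q) (primorial p) ∧
        ∀ δ, γ₂ < δ → δ < γ₂ + 2 * q → ¬ Nat.Coprime δ (primorial p)) := by
  have hq3 : 3 ≤ q := hqmax 3 Nat.prime_three (by omega)
  have hq1p : q + 1 < p := by
    rcases hp.eq_two_or_odd with h | h <;> rcases hq.eq_two_or_odd with h' | h' <;> omega
  have hP : primorial p ≠ 1 := by have := le_primorial_self (n := p); omega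
  obtain ⟨γ₁, hγ₁, hsmall₁, hq₁, hp₁⟩ := exists_lt_primorial_dvd_add_of_lt hp hq hqp (q - 1) (q + 1)
  obtain ⟨γ₂, hγ₂, hsmall₂, hq₂, hp₂⟩ := exists_lt_primorial_dvd_add_of_lt hp hq hqp (q + 1) (q - 1)
  have gap₁ := isUnitGap_primorial hp hq hq3 hq1p hqmax hsmall₁ hq₁ hp₁ (.inl ⟨rfl, rfl⟩)
  have gap₂ := isUnitGap_primorial hp hq hq3 hq1p hqmax hsmall₂ hq₂ hp₂ (.inr ⟨rfl, rfl⟩)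
  refine ⟨γ₁, γ₂, Finset.mem_Icc.mpr ⟨gap₁.pos hP, hγ₁.le⟩,
    Finset.mem_Icc.mpr ⟨gap₂.pos hP, hγ₂.le⟩, ?_, gap₁, gap₂⟩
  rintro rfl
  exact not_dvd_of_dvd_of_ne hq₁ (by omega) (by omega) (by omega) hq₂
end

section
/- Fix J ≥ 1 and for a prime variable q let M_J(q) be the J×J upper bidiagonal matrix with diagonal entries a_j(q) = (q − j − 1)/(q − 2) for j = 1, ..., J (so a_1 = 1) and superdiagonal entries b_j(q) = j/(q − 2) in position (j, j+1). Then M_J(q) = R Λ(q) L, where Λ(q) = diag(a_1(q), ..., a_J(q)), R is the upper triangular matrix with R_{ij} = (−1)^{i+j} C(j−1, i−1) for i ≤ j, L is the upper triangular matrix with L_{ij} = C(j−1, i−1) for i ≤ j, and L·R = I. In particular, the eigenvector matrices R and L do not depend on q. -/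
/-!
Let `L` be the upper Pascal matrix `L i j = C(j, i)`. Its inverse is the signed Pascal matrix
`R i j = (-1)^(i+j) C(j, i)`: the two are the matrices of `p(X) ↦ p(X + 1)` and `p(X) ↦ p(X - 1)`
in the monomial basis, and in coordinates this is the binomial expansion of `((X + 1) - 1)^k = X^k`.
The rows of `L` are left eigenvectors of `M`: because `M` is bidiagonal, `(L M)_{ik}` has only two
terms, and `L M = Λ L` reduces to `k C(k-1, i) = (k - i) C(k, i)`. Hence `M = R Λ L`.
-/

open Finset Matrix Polynomial

theorem Fin.sum_univ_eq_sum_range_succ_of_eq_zero {M : Type*} [AddCommMonoid M] {n : ℕ}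
    (f : ℕ → M) (k : Fin n) (hf : ∀ j, (k : ℕ) < j → f j = 0) :
    ∑ j : Fin n, f j = ∑ j ∈ range (k + 1), f j := by
  rw [Fin.sum_univ_eq_sum_range]
  refine (sum_subset (range_subset_range.2 k.isLt) fun j _ hj => hf j ?_).symm
  simpa using hj

theorem sum_range_choose_mul_neg_one_pow_mul_choose {R : Type*} [CommRing R] (i k : ℕ) :
    ∑ j ∈ range (k + 1), (j.choose i : R) * ((-1) ^ (j + k) * (k.choose j : R)) =
      if i = k then 1 else 0 := by
  have h := congrArg (coeff · i) (sub_pow (X + 1 : R[X]) 1 k)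
  simp only [add_sub_cancel_right, coeff_X_pow, one_pow, mul_one, finsetSum_coeff] at h
  rw [h]
  refine sum_congr rfl fun j _ => ?_
  rw [← C_eq_natCast, show (-1 : R[X]) = C (-1) by simp, ← C_pow, coeff_mul_C, coeff_C_mul,
    coeff_X_add_one_pow]
  ring

theorem Nat.succ_mul_choose_add_mul_succ_choose (m i : ℕ) :
    (m + 1) * m.choose i + i * (m + 1).choose i = (m + 1) * (m + 1).choose i := by
  rcases le_or_gt i (m + 1) with hi | hi
  · rw [mul_comm (m + 1), Nat.choose_mul_succ_eq, mul_comm i, ← Nat.mul_add,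
      Nat.sub_add_cancel hi, mul_comm]
  · simp [Nat.choose_eq_zero_of_lt hi, Nat.choose_eq_zero_of_lt (by omega : m < i)]

section Pascal

variable (R : Type*) [CommRing R] (n : ℕ)

def pascal : Matrix (Fin n) (Fin n) R :=
  of fun i j => if (i : ℕ) ≤ (j : ℕ) then (Nat.choose (j : ℕ) (i : ℕ) : R) else 0

def signedPascal : Matrix (Fin n) (Fin n) R :=
  of fun i j => if (i : ℕ) ≤ (j : ℕ) then
    (-1 : R) ^ ((i : ℕ) + (j : ℕ)) * (Nat.choose (j : ℕ) (i : ℕ) : R) else 0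

variable {R n}

theorem pascal_apply (i j : Fin n) : pascal R n i j = ((j : ℕ).choose i : R) := by
  simp only [pascal, of_apply, ite_eq_left_iff, not_le]
  intro h
  rw [Nat.choose_eq_zero_of_lt h, Nat.cast_zero]

theorem signedPascal_apply (i j : Fin n) :
    signedPascal R n i j = (-1) ^ ((i : ℕ) + j) * ((j : ℕ).choose i : R) := by
  simp only [signedPascal, of_apply, ite_eq_left_iff, not_le]
  intro h
  rw [Nat.choose_eq_zero_of_lt h, Nat.cast_zero, mul_zero]

variable (R n)

theorem pascal_mul_signedPascal : pascal R n * signedPascal R n = 1 := by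
  ext i k
  rw [mul_apply, one_apply]
  simp only [pascal_apply, signedPascal_apply]
  rw [Fin.sum_univ_eq_sum_range_succ_of_eq_zero
      (fun j => (j.choose i : R) * ((-1) ^ (j + k) * ((k : ℕ).choose j : R))) k
      fun j hj => by rw [Nat.choose_eq_zero_of_lt hj, Nat.cast_zero, mul_zero, mul_zero],
    sum_range_choose_mul_neg_one_pow_mul_choose]
  exact if_congr Fin.val_inj rfl rfl

end Pascal

section Transfer

variable {K : Type*} [Field K] (x : K)

/- With `x = q - 2` and indices shifted to start at `0`, `transfer x n` is `M_n(q)`: its diagonal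
entry `(x - i) / x` is `a_{i+1}(q)` and its superdiagonal entry `(i + 1) / x` is `b_{i+1}(q)`. -/
def transferEntry (i j : ℕ) : K :=
  if i = j then (x - i) / x else if i + 1 = j then (i + 1) / x else 0

def transfer (n : ℕ) : Matrix (Fin n) (Fin n) K :=
  of fun i j => transferEntry x i j

theorem sum_range_choose_mul_transferEntry (i k : ℕ) :
    ∑ j ∈ range (k + 1), (j.choose i : K) * transferEntry x j k = (x - i) / x * k.choose i := by
  cases k with
  | zero => cases i <;> simp [transferEntry]
  | succ m =>
    have hlow : ∑ j ∈ range m, (j.choose i : K) * transferEntry x j (m + 1) = 0 :=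
      sum_eq_zero fun j hj => by
        have := mem_range.1 hj
        simp [transferEntry, show j ≠ m + 1 by omega, show j ≠ m by omega]
    have key : ((m + 1) * m.choose i + i * (m + 1).choose i : K) = (m + 1) * (m + 1).choose i := by
      exact_mod_cast congrArg (Nat.cast : ℕ → K) (Nat.succ_mul_choose_add_mul_succ_choose m i)
    rw [sum_range_succ, sum_range_succ, hlow, zero_add]
    simp only [transferEntry, if_true, if_neg (Nat.succ_ne_self m).symm, Nat.cast_add_one]
    simp only [mul_div_assoc', div_mul_eq_mul_div, ← add_div]
    congr 1
    linear_combination key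

theorem pascal_mul_transfer (n : ℕ) :
    pascal K n * transfer x n = diagonal (fun j : Fin n => (x - j) / x) * pascal K n := by
  ext i k
  rw [mul_apply, diagonal_mul, pascal_apply]
  simp only [pascal_apply, transfer, of_apply]
  rw [Fin.sum_univ_eq_sum_range_succ_of_eq_zero (fun j => (j.choose i : K) * transferEntry x j k) k
      fun j hj => by simp [transferEntry, hj.ne', show j + 1 ≠ k by omega],
    sum_range_choose_mul_transferEntry]

theorem transfer_eq_signedPascal_mul_diagonal_mul_pascal (n : ℕ) :
    transfer x n = signedPascal K n * diagonal (fun j : Fin n => (x - j) / x) * pascal K n := by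
  rw [Matrix.mul_assoc, ← pascal_mul_transfer, ← Matrix.mul_assoc,
    mul_eq_one_comm.mp (pascal_mul_signedPascal K n), Matrix.one_mul]

end Transfer

theorem stmt_14_general (J : ℕ) (q : ℕ) :
    let a : Fin J → ℝ := fun j => ((q : ℝ) - ((j : ℕ) : ℝ) - 2) / ((q : ℝ) - 2)
    let M : Matrix (Fin J) (Fin J) ℝ := Matrix.of fun i j =>
      if i = j then a i
      else if (i : ℕ) + 1 = (j : ℕ) then (((i : ℕ) : ℝ) + 1) / ((q : ℝ) - 2)
      else 0
    let R : Matrix (Fin J) (Fin J) ℝ := Matrix.of fun i j =>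
      if (i : ℕ) ≤ (j : ℕ) then
        (-1 : ℝ) ^ ((i : ℕ) + (j : ℕ)) * (Nat.choose (j : ℕ) (i : ℕ) : ℝ)
      else 0
    let L : Matrix (Fin J) (Fin J) ℝ := Matrix.of fun i j =>
      if (i : ℕ) ≤ (j : ℕ) then (Nat.choose (j : ℕ) (i : ℕ) : ℝ) else 0
    M = R * Matrix.diagonal a * L ∧ L * R = 1 := by
  intro a M R L
  have ha : a = fun j : Fin J => ((q : ℝ) - 2 - j) / ((q : ℝ) - 2) := by
    funext j
    rw [sub_right_comm]
  have hM : M = transfer ((q : ℝ) - 2) J := by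
    ext i j
    simp only [M, ha, transfer, transferEntry, of_apply, Fin.val_inj]
  rw [hM, ha]
  exact ⟨transfer_eq_signedPascal_mul_diagonal_mul_pascal _ J, pascal_mul_signedPascal ℝ J⟩

theorem stmt_14 (J : ℕ) (hJ : 1 ≤ J) (q : ℕ) (hq : q.Prime) (hq2 : 2 < q) :
    let a : Fin J → ℝ := fun j => ((q : ℝ) - ((j : ℕ) : ℝ) - 2) / ((q : ℝ) - 2)
    let M : Matrix (Fin J) (Fin J) ℝ := Matrix.of fun i j =>
      if i = j then a i
      else if (i : ℕ) + 1 = (j : ℕ) then (((i : ℕ) : ℝ) + 1) / ((q : ℝ) - 2)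
      else 0
    let R : Matrix (Fin J) (Fin J) ℝ := Matrix.of fun i j =>
      if (i : ℕ) ≤ (j : ℕ) then
        (-1 : ℝ) ^ ((i : ℕ) + (j : ℕ)) * (Nat.choose (j : ℕ) (i : ℕ) : ℝ)
      else 0
    let L : Matrix (Fin J) (Fin J) ℝ := Matrix.of fun i j =>
      if (i : ℕ) ≤ (j : ℕ) then (Nat.choose (j : ℕ) (i : ℕ) : ℝ) else 0
    M = R * Matrix.diagonal a * L ∧ L * R = 1 :=
  stmt_14_general J q
end

section
/- For every even g with 0 < g < p#, the ratio of the count of γ in [1, p#] with gcd(γ, p#) = gcd(γ + g, p#) = 1 to the count with gcd(γ, p#) = gcd(γ + 2, p#) = 1 equals ∏_{2 < q ≤ p, q prime, q | g} (q − 1)/(q − 2); in particular this ratio is at least 1, with equality if and only if g has no odd prime factor ≤ p. -/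
/-!
By the Chinese remainder theorem, the number of admissible residues modulo `p#` is the product
over the primes `q ≤ p` of the number of residues `x` mod `q` with `x` and `x + h` both units,
namely `q - 1` if `q ∣ h` and `q - 2` otherwise. For even `h` the factor at `q = 2` is `1`, so the
ratio for shifts `g` and `2` is the product of `(q - 1) / (q - 2) > 1` over the odd `q ∣ g`.
-/

open Finset

theorem Nat.Prime.three_le_iff_odd {q : ℕ} (hq : q.Prime) : 3 ≤ q ↔ Odd q := by
  rcases hq.eq_two_or_odd' with rfl | hodd
  · decide
  · obtain ⟨k, rfl⟩ := hodd
    exact iff_of_true (by have := hq.two_le; omega) ⟨k, rfl⟩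

theorem Finset.prod_eq_one_iff_of_one_lt {ι R : Type*} [CommSemiring R] [PartialOrder R]
    [IsStrictOrderedRing R] {s : Finset ι} {f : ι → R} (hf : ∀ i ∈ s, 1 < f i) :
    ∏ i ∈ s, f i = 1 ↔ s = ∅ := by
  refine ⟨fun h => ?_, fun h => by simp [h]⟩
  by_contra hs
  have := prod_lt_prod_of_nonempty (f := 1) (fun _ _ => one_pos) hf (nonempty_iff_ne_empty.2 hs)
  simp [h] at this

namespace Nat

def coprimeShiftCount (m h : ℕ) : ℕ :=
  #{γ ∈ Icc 1 m | γ.Coprime m ∧ (γ + h).Coprime m}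

end Nat

namespace ZMod

noncomputable def unitShiftCount (m h : ℕ) : ℕ :=
  Nat.card {x : ZMod m // IsUnit x ∧ IsUnit (x + h)}

theorem unitShiftCount_one (h : ℕ) : unitShiftCount 1 h = 1 :=
  Nat.card_eq_one_iff_unique.2
    ⟨inferInstance, ⟨⟨0, isUnit_of_subsingleton _, isUnit_of_subsingleton _⟩⟩⟩

theorem unitShiftCount_mul {a b : ℕ} (hab : a.Coprime b) (h : ℕ) :
    unitShiftCount (a * b) h = unitShiftCount a h * unitShiftCount b h := by
  rw [unitShiftCount, unitShiftCount, unitShiftCount, ← Nat.card_prod]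
  apply Nat.card_congr
  refine ((chineseRemainder hab).toEquiv.subtypeEquiv fun x => ?_).trans
    (Equiv.subtypeProdEquivProd (p := fun y : ZMod a => IsUnit y ∧ IsUnit (y + h))
      (q := fun z : ZMod b => IsUnit z ∧ IsUnit (z + h)))
  rw [← isUnit_map_iff (chineseRemainder hab) x,
    ← isUnit_map_iff (chineseRemainder hab) (x + h)]
  simp only [RingEquiv.toEquiv_eq_coe, EquivLike.coe_coe, map_add, map_natCast, Prod.isUnit_iff,
    Prod.fst_add, Prod.snd_add, Prod.fst_natCast, Prod.snd_natCast]
  tauto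

theorem unitShiftCount_prod {s : Finset ℕ} (hs : (s : Set ℕ).Pairwise Nat.Coprime) (h : ℕ) :
    unitShiftCount (∏ a ∈ s, a) h = ∏ a ∈ s, unitShiftCount a h := by
  induction s using Finset.cons_induction with
  | empty => exact unitShiftCount_one h
  | cons a s ha ih =>
    rw [coe_cons, Set.pairwise_insert_of_symm] at hs
    rw [prod_cons, prod_cons, ← ih hs.1, unitShiftCount_mul]
    exact Nat.Coprime.prod_right fun b hb => hs.2 b hb fun hab => ha (hab ▸ hb)

theorem unitShiftCount_prime {q : ℕ} (hq : q.Prime) (h : ℕ) :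
    unitShiftCount q h = if q ∣ h then q - 1 else q - 2 := by
  have : Fact q.Prime := ⟨hq⟩
  classical
  have hunits :
      ({x | IsUnit x ∧ IsUnit (x + h)} : Finset (ZMod q)) = univ \ {0, -(h : ZMod q)} := by
    ext x
    simp [isUnit_iff_ne_zero, eq_neg_iff_add_eq_zero]
  rw [unitShiftCount, Nat.card_eq_fintype_card, Fintype.card_subtype, hunits,
    card_sdiff_of_subset (subset_univ _), card_univ, ZMod.card]
  split_ifs with hdvd
  · simp [(natCast_eq_zero_iff h q).2 hdvd]
  · rw [card_pair]
    simpa [eq_comm] using (natCast_eq_zero_iff h q).not.2 hdvd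

theorem unitShiftCount_div_unitShiftCount_two {q g : ℕ} (hq : q.Prime) (hg : Even g) :
    (unitShiftCount q g : ℝ) / unitShiftCount q 2 =
      if Odd q ∧ q ∣ g then ((q : ℝ) - 1) / ((q : ℝ) - 2) else 1 := by
  rcases hq.eq_two_or_odd' with rfl | hodd
  · simp [unitShiftCount_prime Nat.prime_two, hg.two_dvd]
  have h3 : 3 ≤ q := hq.three_le_iff_odd.2 hodd
  have hq2 : ¬ q ∣ 2 := fun h => by have := Nat.le_of_dvd two_pos h; omega
  have hsub : ((q - 2 : ℕ) : ℝ) ≠ 0 := by rw [Nat.cast_ne_zero]; omega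
  rw [unitShiftCount_prime hq, unitShiftCount_prime hq, if_neg hq2]
  simp only [hodd, true_and]
  split_ifs
  · push_cast [Nat.cast_sub (by omega : 1 ≤ q), Nat.cast_sub (by omega : 2 ≤ q)]; rfl
  · exact div_self hsub

end ZMod

open ZMod

theorem Nat.coprimeShiftCount_eq_unitShiftCount {m : ℕ} (hm : m ≠ 0) (h : ℕ) :
    coprimeShiftCount m h = unitShiftCount m h := by
  have : NeZero m := ⟨hm⟩
  classical
  have hper : Function.Periodic (fun γ => γ.Coprime m ∧ (γ + h).Coprime m) m := fun γ => by
    simp only [add_right_comm γ m h, coprime_add_self_left]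
  rw [coprimeShiftCount, ← Ico_add_one_right_eq_Icc, add_comm,
    filter_Ico_card_eq_of_periodic _ _ _ hper, count_eq_card_filter_range, unitShiftCount,
    Nat.card_eq_fintype_card, Fintype.card_subtype]
  refine card_nbij' (fun γ => (γ : ZMod m)) ZMod.val ?_ ?_ ?_ ?_
  · intro γ hγ
    simp only [coe_filter, mem_range, Set.mem_ofPred_eq, mem_univ, true_and] at hγ ⊢
    exact ⟨(isUnit_iff_coprime γ m).2 hγ.2.1,
      by exact_mod_cast (isUnit_iff_coprime _ m).2 hγ.2.2⟩
  · intro x hx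
    simp only [coe_filter, mem_range, Set.mem_ofPred_eq, mem_univ, true_and] at hx ⊢
    refine ⟨val_lt x, (isUnit_iff_coprime _ m).1 ?_, (isUnit_iff_coprime _ m).1 ?_⟩
    · simpa using hx.1
    · simpa using hx.2
  · intro γ hγ
    exact val_cast_of_lt (mem_range.1 (mem_filter.1 hγ).1)
  · intro x _
    exact natCast_zmod_val x

theorem Nat.coprimeShiftCount_primorial (p h : ℕ) :
    coprimeShiftCount (primorial p) h = ∏ q ∈ primesLE p, unitShiftCount q h := by
  rw [coprimeShiftCount_eq_unitShiftCount (primorial_ne_zero p), primorial_eq_prod_primesLE,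
    unitShiftCount_prod]
  intro a ha b hb hab
  exact (coprime_primes (prime_of_mem_primesLE ha) (prime_of_mem_primesLE hb)).2 hab

theorem Nat.coprimeShiftCount_primorial_div_two (p : ℕ) {g : ℕ} (hg : Even g) :
    (coprimeShiftCount (primorial p) g : ℝ) / coprimeShiftCount (primorial p) 2 =
      ∏ q ∈ Icc 3 p with q.Prime ∧ q ∣ g, ((q : ℝ) - 1) / ((q : ℝ) - 2) := by
  rw [coprimeShiftCount_primorial, coprimeShiftCount_primorial, Nat.cast_prod, Nat.cast_prod,
    ← prod_div_distrib,
    prod_congr rfl fun q hq => unitShiftCount_div_unitShiftCount_two (prime_of_mem_primesLE hq) hg,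
    ← prod_filter]
  congr 1
  ext q
  grind [mem_primesLE, Nat.Prime.three_le_iff_odd]

theorem stmt_19_general (p g : ℕ) (heven : Even g) :
    let Ng : ℕ → ℕ := fun h => ((Finset.Icc 1 (primorial p)).filter
        (fun γ => Nat.Coprime γ (primorial p) ∧ Nat.Coprime (γ + h) (primorial p))).card
    ((Ng g : ℝ) / (Ng 2 : ℝ) =
        ∏ q ∈ (Finset.Icc 3 p).filter (fun q => q.Prime ∧ q ∣ g),
          ((q : ℝ) - 1) / ((q : ℝ) - 2)) ∧
    1 ≤ (Ng g : ℝ) / (Ng 2 : ℝ) ∧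
    ((Ng g : ℝ) / (Ng 2 : ℝ) = 1 ↔ ∀ q, q.Prime → Odd q → q ≤ p → ¬ q ∣ g) := by
  intro Ng
  have hratio : (Ng g : ℝ) / Ng 2 = _ := Nat.coprimeShiftCount_primorial_div_two p heven
  have hfactor :
      ∀ q ∈ {q ∈ Icc 3 p | q.Prime ∧ q ∣ g}, 1 < ((q : ℝ) - 1) / ((q : ℝ) - 2) := by
    intro q hq
    have h3 : (3 : ℝ) ≤ q := by exact_mod_cast (mem_Icc.1 (mem_filter.1 hq).1).1
    rw [one_lt_div (by linarith)]
    linarith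
  refine ⟨hratio, hratio ▸ one_le_prod fun q hq => (hfactor q hq).le, ?_⟩
  rw [hratio, prod_eq_one_iff_of_one_lt hfactor, filter_eq_empty_iff]
  grind [Nat.Prime.three_le_iff_odd]

theorem stmt_19 (p g : ℕ) (hp : p.Prime) (hp3 : 3 ≤ p) (heven : Even g) (hg : 0 < g)
    (hlt : g < primorial p) :
    let Ng : ℕ → ℕ := fun h => ((Finset.Icc 1 (primorial p)).filter
        (fun γ => Nat.Coprime γ (primorial p) ∧ Nat.Coprime (γ + h) (primorial p))).card
    ((Ng g : ℝ) / (Ng 2 : ℝ) =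
        ∏ q ∈ (Finset.Icc 3 p).filter (fun q => q.Prime ∧ q ∣ g),
          ((q : ℝ) - 1) / ((q : ℝ) - 2)) ∧
    1 ≤ (Ng g : ℝ) / (Ng 2 : ℝ) ∧
    ((Ng g : ℝ) / (Ng 2 : ℝ) = 1 ↔ ∀ q, q.Prime → Odd q → q ≤ p → ¬ q ∣ g) :=
  stmt_19_general p g heven
end
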